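/- arXiv:2307.04267 — 3 statements merged into one kernel-verified Lean document; each statement's English description precedes it below -/
import Mathlib

section
/- The effective Hamiltonian H_eff is a positive semidefinite Hermitian operator: for every vector ψ in the total Hilbert space ((ℂ²)^{⊗4})^{⊗N}, the inner product ⟨ψ, H_eff ψ⟩ is real and nonnegative. -/
/-! STATEMENT 2: H_eff is positive semidefinite Hermitian: for every ψ, ⟨ψ, H_eff ψ⟩ is real and nonnegative. -/

open Matrix Finset

noncomputable section

/-- The Pauli matrices σ^x, σ^y, σ^z. -/
def pauli : Fin 3 → Matrix (Fin 2) (Fin 2) ℂ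
  | 0 => !![0, 1; 1, 0]
  | 1 => !![0, -Complex.I; Complex.I, 0]
  | 2 => !![1, 0; 0, -1]

/-- The single-contour matrix: the Pauli matrix `σ^α` on forward contours `a = 1, 3`
(indices `0, 2`), and its entrywise complex conjugate `(σ^α)^*` on backward contours
`a = 2, 4` (indices `1, 3`). -/
def pauliC (a : Fin 4) (α : Fin 3) : Matrix (Fin 2) (Fin 2) ℂ :=
  if a = 0 ∨ a = 2 then pauli α else (pauli α).map (starRingEnd ℂ)

/-- Basis of the replica Hilbert space ((ℂ²)^{⊗4})^{⊗N}: a site index `i : Fin N` and a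
contour index `a : Fin 4` give a qubit. -/
abbrev RepIdx (N : ℕ) := Fin N → Fin 4 → Fin 2

/-- `τ_{i,a}^α`: acts as `pauliC a α` on contour `a` of site `i`, identity elsewhere. -/
def tau (N : ℕ) (i : Fin N) (a : Fin 4) (α : Fin 3) :
    Matrix (RepIdx N) (RepIdx N) ℂ :=
  Matrix.of fun f g =>
    pauliC a α (f i a) (g i a) *
      ∏ p ∈ (univ : Finset (Fin N × Fin 4)).erase (i, a),
        if f p.1 p.2 = g p.1 p.2 then (1 : ℂ) else 0

/-- The effective Hamiltonian
`H_eff = (J/2) Σ_{i=1}^{N-1} Σ_{a,b} (-1)^{a+b} (Σ_α τ_{i,a}^α τ_{i,b}^α)(Σ_β τ_{i+1,a}^β τ_{i+1,b}^β)`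
on the open chain of `N` sites. -/
def Heff (N : ℕ) (J : ℝ) : Matrix (RepIdx N) (RepIdx N) ℂ :=
  ((J : ℂ) / 2) • ∑ i : Fin N,
    if h : (i : ℕ) + 1 < N then
      ∑ a : Fin 4, ∑ b : Fin 4, ((-1 : ℂ) ^ ((a : ℕ) + (b : ℕ))) •
        ((∑ α : Fin 3, tau N i a α * tau N i b α) *
         (∑ β : Fin 3, tau N ⟨(i : ℕ) + 1, h⟩ a β * tau N ⟨(i : ℕ) + 1, h⟩ b β))
    else 0

/-- The single-site state |id⟩⟩ = ½(|0000⟩+|0011⟩+|1100⟩+|1111⟩). -/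
def idS : (Fin 4 → Fin 2) → ℂ := fun f => if f 0 = f 1 ∧ f 2 = f 3 then 1 / 2 else 0

/-- The single-site state |swap⟩⟩ = ½(|0000⟩+|1001⟩+|0110⟩+|1111⟩). -/
def swapS : (Fin 4 → Fin 2) → ℂ := fun f => if f 0 = f 3 ∧ f 1 = f 2 then 1 / 2 else 0

/-- The product state |id⟩⟩^{⊗N}. -/
def idN (N : ℕ) : RepIdx N → ℂ := fun f => ∏ i : Fin N, idS (f i)

/-- The product state |swap⟩⟩^{⊗N}. -/
def swapN (N : ℕ) : RepIdx N → ℂ := fun f => ∏ i : Fin N, swapS (f i)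

/-! For `i ≠ j` the bond term of `H_eff` is `Σ_{α,β} (O_{ij}^{αβ})²` with
`O_{ij}^{αβ} = Σ_a (-1)^a τ_{i,a}^α τ_{j,a}^β`: expanding the square only needs operators on
different sites to commute. Each `τ` is Hermitian, so each `O_{ij}^{αβ}` is Hermitian and its
square is positive semidefinite. -/

open scoped ComplexOrder

namespace Matrix

section PiKron

variable {κ ι n R : Type*} [Fintype κ] [Fintype ι] [CommSemiring R]

/-- The tensor product `⨂_{(k,i)} P (k, i)` of a family of square matrices, on the
index type `κ → ι → n` of the tensor power. -/
def piKron (P : κ × ι → Matrix n n R) : Matrix (κ → ι → n) (κ → ι → n) R :=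
  of fun f g => ∏ p : κ × ι, P p (f p.1 p.2) (g p.1 p.2)

theorem IsHermitian.piKron [StarRing R] {P : κ × ι → Matrix n n R}
    (hP : ∀ p, (P p).IsHermitian) : (piKron P).IsHermitian := by
  ext f g
  simp only [Matrix.piKron, conjTranspose_apply, of_apply, star_prod]
  exact Finset.prod_congr rfl fun p _ => (hP p).apply _ _

variable [Fintype n] [DecidableEq κ] [DecidableEq ι]

theorem piKron_mul (P Q : κ × ι → Matrix n n R) :
    piKron P * piKron Q = piKron (P * Q) := by
  ext f g
  simp only [piKron, mul_apply, of_apply, Pi.mul_apply]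
  rw [← Equiv.sum_comp (Equiv.curry κ ι n), Finset.prod_univ_sum]
  refine Finset.sum_congr rfl fun x _ => ?_
  simp only [Equiv.curry_apply, Function.curry, Finset.prod_mul_distrib]

theorem Commute.piKron {P Q : κ × ι → Matrix n n R} (h : Commute P Q) :
    Commute (piKron P) (piKron Q) := by
  rw [Commute, SemiconjBy, piKron_mul, piKron_mul, h.eq]

end PiKron

section SumOfSquares

variable {ι κ μ R : Type*} [Fintype ι] [Fintype κ] [Fintype μ]

theorem sum_smul_mul_mul_sum_smul_mul {S : Type*} [CommSemiring S] [Semiring R] [Algebra S R]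
    (c : ι → S) (x y : ι → R) (hxy : ∀ a b, Commute (y a) (x b)) :
    (∑ a, c a • (x a * y a)) * (∑ b, c b • (x b * y b)) =
      ∑ a, ∑ b, (c a * c b) • (x a * x b * (y a * y b)) := by
  rw [Finset.sum_mul_sum]
  refine Finset.sum_congr rfl fun a _ => Finset.sum_congr rfl fun b _ => ?_
  rw [smul_mul_smul_comm, mul_assoc, (hxy a b).left_comm, ← mul_assoc]

variable {m : Type*} [Fintype m] [DecidableEq m] [CommRing R] [PartialOrder R] [StarRing R]
  [StarOrderedRing R]

theorem posSemidef_sum_smul_sum_mul_mul_sum_mul (c : ι → R) (hc : ∀ a, IsSelfAdjoint (c a))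
    (x : ι → κ → Matrix m m R) (y : ι → μ → Matrix m m R)
    (hx : ∀ a α, (x a α).IsHermitian) (hy : ∀ a β, (y a β).IsHermitian)
    (hxy : ∀ a b α β, Commute (x a α) (y b β)) :
    (∑ a, ∑ b, (c a * c b) • ((∑ α, x a α * x b α) * (∑ β, y a β * y b β))).PosSemidef := by
  set O : κ → μ → Matrix m m R := fun α β => ∑ a, c a • (x a α * y a β)
  have hO : ∀ α β, (O α β).IsHermitian := fun α β =>
    isSelfAdjoint_sum _ fun a _ =>
      (hc a).smul (((hx a α).commute_iff (hy a β)).mp (hxy a a α β))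
  have expand : ∑ a, ∑ b, (c a * c b) • ((∑ α, x a α * x b α) * (∑ β, y a β * y b β)) =
      ∑ α, ∑ β, (O α β)ᴴ * O α β := by
    simp only [(hO _ _).eq, O, sum_smul_mul_mul_sum_smul_mul c _ _ fun a b => (hxy b a _ _).symm,
      Finset.sum_mul_sum, Finset.smul_sum]
    simp only [Finset.sum_comm (γ := ι) (α := κ), Finset.sum_comm (γ := ι) (α := μ)]
  rw [expand]
  exact posSemidef_sum _ fun α _ => posSemidef_sum _ fun β _ => posSemidef_conjTranspose_mul_self _

end SumOfSquares

end Matrix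

theorem pauli_isHermitian (α : Fin 3) : (pauli α).IsHermitian := by
  fin_cases α <;> ext i j <;> fin_cases i <;> fin_cases j <;> simp [pauli]

theorem pauliC_isHermitian (a : Fin 4) (α : Fin 3) : (pauliC a α).IsHermitian := by
  unfold pauliC
  split_ifs
  · exact pauli_isHermitian α
  · exact (pauli_isHermitian α).map _ fun _ => rfl

theorem tau_eq_piKron (N : ℕ) (i : Fin N) (a : Fin 4) (α : Fin 3) :
    tau N i a α = piKron (Pi.mulSingle (i, a) (pauliC a α)) := by
  ext f g
  rw [tau, piKron, of_apply, of_apply, ← Finset.mul_prod_erase _ _ (mem_univ (i, a)),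
    Pi.mulSingle_eq_same]
  congr 1
  refine Finset.prod_congr rfl fun p hp => ?_
  rw [Pi.mulSingle_eq_of_ne (Finset.ne_of_mem_erase hp), one_apply]

theorem tau_isHermitian (N : ℕ) (i : Fin N) (a : Fin 4) (α : Fin 3) :
    (tau N i a α).IsHermitian := by
  rw [tau_eq_piKron]
  refine IsHermitian.piKron fun p => ?_
  rw [Pi.mulSingle_apply]
  split_ifs
  · exact pauliC_isHermitian a α
  · exact isHermitian_one

theorem tau_commute {N : ℕ} {i j : Fin N} {a b : Fin 4} (h : (i, a) ≠ (j, b)) (α β : Fin 3) :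
    Commute (tau N i a α) (tau N j b β) := by
  rw [tau_eq_piKron, tau_eq_piKron]
  exact (Pi.mulSingle_commute h _ _).piKron

theorem Heff_posSemidef (N : ℕ) {J : ℝ} (hJ : 0 ≤ J) : (Heff N J).PosSemidef := by
  have hJ2 : (0 : ℂ) ≤ (J : ℂ) / 2 := by
    rw [show (J : ℂ) / 2 = ((J / 2 : ℝ) : ℂ) by push_cast; ring]
    exact Complex.zero_le_real.mpr (by linarith)
  refine PosSemidef.smul (posSemidef_sum _ fun i _ => ?_) hJ2
  split_ifs with h
  · have hij : i ≠ ⟨i + 1, h⟩ := Fin.ne_of_lt (Nat.lt_succ_self i)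
    simp only [pow_add]
    exact posSemidef_sum_smul_sum_mul_mul_sum_mul (fun a : Fin 4 => (-1 : ℂ) ^ (a : ℕ))
      (fun _ => (IsSelfAdjoint.one ℂ).neg.pow _) _ _ (fun a α => tau_isHermitian N i a α)
      (fun a β => tau_isHermitian N _ a β) fun a b α β => tau_commute (by simp [hij]) α β
  · exact PosSemidef.zero

/-- the effective Hamiltonian is a positive semidefinite Hermitian operator:
it is Hermitian, and for every vector `ψ` the inner product `⟨ψ, H_eff ψ⟩` is real
(vanishing imaginary part) and nonnegative (real part `≥ 0`). -/
theorem stmt2 (N : ℕ) (J : ℝ) (hJ : 0 < J) :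
    (Heff N J).IsHermitian ∧
    ∀ ψ : RepIdx N → ℂ,
      (star ψ ⬝ᵥ (Heff N J).mulVec ψ).im = 0 ∧
      0 ≤ (star ψ ⬝ᵥ (Heff N J).mulVec ψ).re := by
  have hH := Heff_posSemidef N hJ.le
  refine ⟨hH.isHermitian, fun ψ => ?_⟩
  obtain ⟨hre, him⟩ := Complex.nonneg_iff.mp (hH.dotProduct_mulVec_nonneg ψ)
  exact ⟨him.symm, hre⟩

end
end

section
/- The product state |swap⟩⟩^{⊗N} is a zero-energy ground state of the effective Hamiltonian: H_eff (|swap⟩⟩^{⊗N}) = 0. -/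
/-! On `|swap⟩⟩` contour 1 is maximally entangled with contour 4 and contour 2 with contour 3,
so a matrix `A` acting on one contour of a pair acts on `|swap⟩⟩` as `Aᵀ` on its partner. The
backward-contour matrices are `(σ^α)^* = (σ^α)ᵀ`, and `σ^α` squares to one; hence the
single-site operators `Σ_α τ_a^α τ_b^α` give the same vector on `|swap⟩⟩` for `a = 1` and `a = 4`,
and for `a = 2` and `a = 3`. In every bond term of `H_eff` these partners carry opposite signs
`(-1)^(a+b)`, so each bond annihilates `|swap⟩⟩^{⊗N}`. -/

open Matrix Finset

noncomputable section

section ActAt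

variable {κ β : Type*} [DecidableEq κ] [Fintype β]

def actAt (a : κ) (A : Matrix β β ℂ) (v : (κ → β) → ℂ) : (κ → β) → ℂ :=
  fun y => ∑ c, A (y a) c * v (Function.update y a c)

lemma actAt_actAt_self (a : κ) (A B : Matrix β β ℂ) (v : (κ → β) → ℂ) :
    actAt a A (actAt a B v) = actAt a (A * B) v := by
  funext y
  simp only [actAt, Function.update_self, Function.update_idem, Matrix.mul_apply,
    Finset.mul_sum, Finset.sum_mul, mul_assoc]
  exact Finset.sum_comm

lemma actAt_one [DecidableEq β] (a : κ) (v : (κ → β) → ℂ) : actAt a 1 v = v := by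
  funext y
  simp [actAt, Matrix.one_apply]

lemma actAt_comm {a b : κ} (hab : a ≠ b) (A B : Matrix β β ℂ) (v : (κ → β) → ℂ) :
    actAt a A (actAt b B v) = actAt b B (actAt a A v) := by
  funext y
  simp only [actAt, Finset.mul_sum, Function.update_of_ne hab, Function.update_of_ne hab.symm,
    Function.update_comm hab]
  rw [Finset.sum_comm]
  refine Finset.sum_congr rfl fun c _ => Finset.sum_congr rfl fun d _ => ?_
  ring

lemma actAt_mul_const (a : κ) (A : Matrix β β ℂ) (v : (κ → β) → ℂ) (k : ℂ) :
    actAt a A (fun y => v y * k) = fun y => actAt a A v y * k := by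
  funext y
  simp only [actAt, Finset.sum_mul, mul_assoc]

lemma actAt_pair_eq [DecidableEq β] {a a' : κ} (haa' : a ≠ a') {σ : κ → Matrix β β ℂ}
    (hσ : σ a' = (σ a)ᵀ) (hsq : σ a * σ a = 1) {v : (κ → β) → ℂ}
    (hv : ∀ A, actAt a A v = actAt a' Aᵀ v) (b : κ) :
    actAt a' (σ a') (actAt b (σ b) v) = actAt a (σ a) (actAt b (σ b) v) := by
  have hsq' : σ a' * σ a' = 1 := by rw [hσ, ← Matrix.transpose_mul, hsq, Matrix.transpose_one]
  rcases eq_or_ne b a with rfl | hba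
  · rw [actAt_actAt_self b (σ b), hsq, actAt_one, hv, ← hσ, actAt_actAt_self, hsq', actAt_one]
  rcases eq_or_ne b a' with rfl | hba'
  · rw [actAt_actAt_self b (σ b), hsq', actAt_one, hσ, ← hv, actAt_actAt_self, hsq, actAt_one]
  rw [actAt_comm hba'.symm, hσ, ← hv, actAt_comm hba.symm]

end ActAt

-- `|swap⟩⟩ = ½ Σ |y₀ y₁ y₁ y₀⟩`: moving `A` from contour 1 to contour 4 transposes it.
lemma actAt_swapS_zero_three (A : Matrix (Fin 2) (Fin 2) ℂ) :
    actAt 0 A swapS = actAt 3 Aᵀ swapS := by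
  funext y
  by_cases h : y 1 = y 2 <;> simp [actAt, swapS, h, eq_comm (a := y 0)]

lemma actAt_swapS_one_two (A : Matrix (Fin 2) (Fin 2) ℂ) :
    actAt 1 A swapS = actAt 2 Aᵀ swapS := by
  funext y
  by_cases h : y 0 = y 3 <;> simp [actAt, swapS, h, eq_comm (a := y 1)]

lemma pauliC_mul_self (a : Fin 4) (α : Fin 3) : pauliC a α * pauliC a α = 1 := by
  fin_cases a <;> fin_cases α <;> ext i j <;> fin_cases i <;> fin_cases j <;>
    simp [pauliC, pauli, Matrix.mul_apply, Fin.sum_univ_two]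

-- `σ^α` is Hermitian, so `(σ^α)^* = (σ^α)ᵀ`.
lemma pauliC_three (α : Fin 3) : pauliC 3 α = (pauliC 0 α)ᵀ := by
  fin_cases α <;> ext i j <;> fin_cases i <;> fin_cases j <;> simp [pauliC, pauli]

lemma pauliC_two (α : Fin 3) : pauliC 2 α = (pauliC 1 α)ᵀ := by
  fin_cases α <;> ext i j <;> fin_cases i <;> fin_cases j <;> simp [pauliC, pauli]

def contourPair (a b : Fin 4) (v : (Fin 4 → Fin 2) → ℂ) : (Fin 4 → Fin 2) → ℂ :=
  ∑ α, actAt a (pauliC a α) (actAt b (pauliC b α) v)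

lemma contourPair_three_swapS (b : Fin 4) : contourPair 3 b swapS = contourPair 0 b swapS :=
  Finset.sum_congr rfl fun α _ => actAt_pair_eq (by decide) (σ := fun a => pauliC a α)
    (pauliC_three α) (pauliC_mul_self 0 α) actAt_swapS_zero_three b

lemma contourPair_two_swapS (b : Fin 4) : contourPair 2 b swapS = contourPair 1 b swapS :=
  Finset.sum_congr rfl fun α _ => actAt_pair_eq (by decide) (σ := fun a => pauliC a α)
    (pauliC_two α) (pauliC_mul_self 1 α) actAt_swapS_one_two b

lemma sum_neg_one_pow_smul_eq_zero {R M : Type*} [Ring R] [AddCommGroup M] [Module R M]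
    (F : Fin 4 → Fin 4 → M) (h3 : ∀ b, F 3 b = F 0 b) (h2 : ∀ b, F 2 b = F 1 b) :
    ∑ a : Fin 4, ∑ b : Fin 4, (-1 : R) ^ ((a : ℕ) + (b : ℕ)) • F a b = 0 := by
  rw [Finset.sum_comm]
  refine Finset.sum_eq_zero fun b _ => ?_
  simp [Fin.sum_univ_four, h3, h2, pow_add, pow_succ, mul_smul]

section ProductState

variable {ι β : Type*} [Fintype ι] [DecidableEq ι]

def prodState (φ : ι → β → ℂ) : (ι → β) → ℂ := fun f => ∏ j, φ j (f j)

lemma prodState_update_apply (φ : ι → β → ℂ) (i : ι) (ψ : β → ℂ) (f : ι → β) :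
    prodState (Function.update φ i ψ) f = ψ (f i) * ∏ j ∈ univ.erase i, φ j (f j) := by
  rw [prodState, ← mul_prod_erase _ _ (mem_univ i), Function.update_self]
  congr 1
  exact prod_congr rfl fun j hj => by rw [Function.update_of_ne (ne_of_mem_erase hj)]

lemma prodState_apply_update (φ : ι → β → ℂ) (x : ι → β) (i : ι) (y : β) :
    prodState φ (Function.update x i y) = φ i y * ∏ j ∈ univ.erase i, φ j (x j) := by
  rw [prodState, ← mul_prod_erase _ _ (mem_univ i), Function.update_self]
  congr 1
  exact prod_congr rfl fun j hj => by rw [Function.update_of_ne (ne_of_mem_erase hj)]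

lemma sum_prodState_update {τ : Type*} (s : Finset τ) (φ : ι → β → ℂ) (i : ι)
    (ψ : τ → β → ℂ) :
    ∑ t ∈ s, prodState (Function.update φ i (ψ t)) =
      prodState (Function.update φ i (∑ t ∈ s, ψ t)) := by
  funext f
  simp [prodState_update_apply, Finset.sum_mul]

end ProductState

lemma tau_mulVec {N : ℕ} (i : Fin N) (a : Fin 4) (α : Fin 3) (w : RepIdx N → ℂ) :
    tau N i a α *ᵥ w =
      fun x => actAt a (pauliC a α) (fun y => w (Function.update x i y)) (x i) := by
  funext x
  set q : Fin 2 → RepIdx N := fun c => Function.update x i (Function.update (x i) a c)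
  have hq_inj : q.Injective := fun c c' h => by simpa [q] using congrFun (congrFun h i) a
  have hmem : ∀ g, (∀ p ∈ univ.erase (i, a), x p.1 p.2 = g p.1 p.2) ↔ g ∈ univ.image q := by
    intro g
    simp only [mem_erase, mem_univ, and_true, mem_image, true_and, Prod.forall, ne_eq,
      Prod.mk.injEq, not_and, q]
    constructor
    · refine fun h => ⟨g i a, funext fun j => funext fun b => ?_⟩
      by_cases hj : j = i
      · subst hj
        by_cases hb : b = a
        · simp [hb]
        · simp [hb, h j b]
      · simp [hj, h j b]
    · rintro ⟨c, rfl⟩ j b hjb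
      by_cases hj : j = i
      · subst hj
        simp [hjb rfl]
      · simp [hj]
  simp only [mulVec, dotProduct, tau, of_apply, prod_boole, hmem, mul_ite, mul_one, mul_zero,
    ite_mul, zero_mul]
  rw [← sum_filter, filter_mem_eq_inter, univ_inter, sum_image hq_inj.injOn]
  simp [actAt, q]

lemma tau_mulVec_prodState {N : ℕ} (i : Fin N) (a : Fin 4) (α : Fin 3)
    (φ : Fin N → (Fin 4 → Fin 2) → ℂ) :
    tau N i a α *ᵥ prodState φ =
      prodState (Function.update φ i (actAt a (pauliC a α) (φ i))) := by
  funext x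
  simp only [tau_mulVec, prodState_apply_update, actAt_mul_const, prodState_update_apply]

lemma sum_tau_mul_tau_mulVec_prodState {N : ℕ} (i : Fin N) (a b : Fin 4)
    (φ : Fin N → (Fin 4 → Fin 2) → ℂ) :
    (∑ α, tau N i a α * tau N i b α) *ᵥ prodState φ =
      prodState (Function.update φ i (contourPair a b (φ i))) := by
  simp only [sum_mulVec, ← mulVec_mulVec, tau_mulVec_prodState, Function.update_self,
    Function.update_idem, sum_prodState_update, contourPair]

lemma bondTerm_mulVec_swapN {N : ℕ} {i i' : Fin N} (h : i ≠ i') (a b : Fin 4) :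
    ((∑ α, tau N i a α * tau N i b α) * (∑ β, tau N i' a β * tau N i' b β)) *ᵥ swapN N =
      prodState (Function.update (Function.update (fun _ => swapS) i' (contourPair a b swapS)) i
        (contourPair a b swapS)) := by
  rw [← mulVec_mulVec, show swapN N = prodState (fun _ => swapS) from rfl,
    sum_tau_mul_tau_mulVec_prodState, sum_tau_mul_tau_mulVec_prodState, Function.update_of_ne h]

theorem stmt4_general (N : ℕ) (J : ℝ) :
    (Heff N J).mulVec (swapN N) = 0 := by
  rw [Heff, smul_mulVec, sum_mulVec, Finset.sum_eq_zero, smul_zero]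
  intro i _
  split_ifs with h
  · have hne : i ≠ ⟨i + 1, h⟩ := Fin.ne_of_lt (Nat.lt_succ_self _)
    simp only [sum_mulVec, smul_mulVec, bondTerm_mulVec_swapN hne]
    exact sum_neg_one_pow_smul_eq_zero _ (fun b => by rw [contourPair_three_swapS])
      (fun b => by rw [contourPair_two_swapS])
  · exact zero_mulVec _

/-- `H_eff` annihilates `|swap⟩⟩^{⊗N}`. -/
theorem stmt4 (N : ℕ) (J : ℝ) (hJ : 0 < J) :
    (Heff N J).mulVec (swapN N) = 0 :=
  stmt4_general N J

end
end

section
/- For c > 0 define the noise perturbation Hamiltonian H_depol = c · Σ_{i=1}^{N} ( 1 - (1/3) Σ_{α∈{x,y,z}} τ_{i,1}^α τ_{i,2}^α ) on ((ℂ²)^{⊗4})^{⊗N}. Then H_depol (|id⟩⟩^{⊗N}) = 0, while ⟨swap|^{⊗N} H_depol |swap⟩⟩^{⊗N} = c·N; in particular, with c = (3/(4δt))·log(1/(1-4λ/3)) for 0 ≤ λ < 3/4, the expectation value on |swap⟩⟩^{⊗N} equals (3N/(4δt))·log(1/(1-4λ/3)). Thus the noise lifts the degeneracy between the two replica-symmetry-broken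 states, favoring |id⟩⟩^{⊗N}. -/
/-!
`H_depol` is `c • ∑ᵢ Dᵢ`, where `Dᵢ` is the single-site matrix
`D = 1 - (1/3) ∑_α σ^α ⊗ (σ^α)^*` on contours 1, 2 of site `i`, so on a product state it
acts one site at a time. In `|id⟩⟩` contours 1, 2 carry a maximally entangled pair, and
`(P ⊗ Q)` acts on it as `P Qᵀ ⊗ 1`; since `σ^α ((σ^α)^*)ᵀ = σ^α (σ^α)ᴴ = 1`, every Pauli term
fixes `|id⟩⟩` and `D |id⟩⟩ = 0`. In `|swap⟩⟩` contours 1, 2 are paired with 4, 3 instead, so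
`⟨swap| P ⊗ Q |swap⟩ = tr P · tr Q / 4`, which vanishes for the traceless Pauli matrices; each
site then contributes `⟨swap| D |swap⟩ = 1`, and the expectation is `c·N`.
-/

open Matrix Finset

noncomputable section

/-- The noise perturbation Hamiltonian
`H_depol = c Σ_{i=1}^N (1 - (1/3) Σ_α τ_{i,1}^α τ_{i,2}^α)` on `((ℂ²)^{⊗4})^{⊗N}`. -/
def Hdepol (N : ℕ) (c : ℝ) : Matrix (RepIdx N) (RepIdx N) ℂ :=
  (c : ℂ) • ∑ i : Fin N,
    ((1 : Matrix (RepIdx N) (RepIdx N) ℂ) -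
      (1 / 3 : ℂ) • ∑ α : Fin 3, tau N i 0 α * tau N i 1 α)

open Function

section ProductState

variable {ι S R : Type*} [Fintype ι] [CommRing R]

variable (R) in
def productState : MultilinearMap R (fun _ : ι => S → R) ((ι → S) → R) :=
  MultilinearMap.pi fun f =>
    (MultilinearMap.mkPiAlgebra R ι R).compLinearMap fun i => LinearMap.proj (f i)

@[simp]
lemma productState_apply (w : ι → S → R) (f : ι → S) :
    productState R w f = ∏ i, w i (f i) := by
  simp [productState, MultilinearMap.mkPiAlgebra_apply]

variable [DecidableEq ι]

lemma star_productState_dotProduct [Fintype S] [StarRing R] (v w : ι → S → R) :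
    star (productState R v) ⬝ᵥ productState R w = ∏ i, star (v i) ⬝ᵥ w i := by
  simp only [dotProduct, Pi.star_apply, productState_apply, star_prod, Fintype.prod_sum,
    ← Finset.prod_mul_distrib]

lemma productState_apply_update (w : ι → S → R) (f : ι → S) (i : ι) (s : S) :
    productState R w (update f i s) = w i s * ∏ j ∈ univ \ {i}, w j (f j) := by
  rw [productState_apply, ← Finset.prod_update_of_mem (Finset.mem_univ i)]
  exact Finset.prod_congr rfl fun j _ => apply_update (fun j => w j) f i s j

lemma productState_update_apply (w : ι → S → R) (i : ι) (u : S → R) (f : ι → S) :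
    productState R (update w i u) f = u (f i) * ∏ j ∈ univ \ {i}, w j (f j) := by
  rw [productState_apply, ← Finset.prod_update_of_mem (Finset.mem_univ i)]
  exact Finset.prod_congr rfl fun j _ => apply_update (fun j φ => φ (f j)) w i u j

end ProductState

section LocalOperator

variable {ι S R : Type*} [Fintype ι] [DecidableEq ι] [Fintype S] [DecidableEq S] [CommRing R]

def localMatrix (i : ι) (A : Matrix S S R) : Matrix (ι → S) (ι → S) R :=
  Matrix.of fun f g => A (f i) (g i) * ∏ j ∈ univ.erase i, if f j = g j then 1 else 0

lemma localMatrix_mulVec_apply (i : ι) (A : Matrix S S R) (v : (ι → S) → R) (f : ι → S) :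
    (localMatrix i A *ᵥ v) f = ∑ s, A (f i) s * v (update f i s) := by
  have hdiag (g : ι → S) : (∏ j ∈ univ.erase i, if f j = g j then (1 : R) else 0) =
      ∑ s, if update f i s = g then (1 : R) else 0 := by
    simp only [update_eq_iff, Finset.prod_boole, ite_and, Finset.sum_ite_eq', Finset.mem_univ,
      if_true, Finset.mem_erase, ne_eq, and_true]
  simp only [mulVec, dotProduct, localMatrix, Matrix.of_apply, hdiag, Finset.mul_sum,
    Finset.sum_mul]
  rw [Finset.sum_comm]
  simp [Finset.sum_ite_eq]

def localOp (i : ι) : Matrix S S R →ₐ[R] Matrix (ι → S) (ι → S) R :=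
  AlgHom.ofLinearMap
    { toFun := localMatrix i
      map_add' A B := by ext f g; simp [localMatrix, add_mul]
      map_smul' c A := by ext f g; simp [localMatrix, mul_assoc] }
    (Matrix.ext_iff_mulVec.2 fun v => funext fun f => by
      simp [localMatrix_mulVec_apply, Matrix.one_apply])
    (fun A B => Matrix.ext_iff_mulVec.2 fun v => funext fun f => by
      simp only [LinearMap.coe_mk, AddHom.coe_mk, ← mulVec_mulVec, localMatrix_mulVec_apply,
        update_self, update_idem, Matrix.mul_apply, Finset.mul_sum, Finset.sum_mul, mul_assoc]
      exact Finset.sum_comm)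

lemma localOp_apply (i : ι) (A : Matrix S S R) : localOp i A = localMatrix i A := rfl

lemma localOp_mulVec_apply (i : ι) (A : Matrix S S R) (v : (ι → S) → R) (f : ι → S) :
    (localOp i A *ᵥ v) f = ∑ s, A (f i) s * v (update f i s) :=
  localMatrix_mulVec_apply i A v f

lemma localOp_mul_localOp_mulVec_apply {i j : ι} (hij : i ≠ j) (P Q : Matrix S S R)
    (v : (ι → S) → R) (f : ι → S) :
    ((localOp i P * localOp j Q) *ᵥ v) f =
      ∑ x, ∑ y, P (f i) x * Q (f j) y * v (update (update f i x) j y) := by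
  simp only [← mulVec_mulVec, localOp_mulVec_apply, update_of_ne hij.symm, Finset.mul_sum,
    mul_assoc]

lemma localOp_mulVec_productState (i : ι) (A : Matrix S S R) (w : ι → S → R) :
    localOp i A *ᵥ productState R w = productState R (update w i (A *ᵥ w i)) := by
  funext f
  rw [localOp_mulVec_apply, productState_update_apply, mulVec, dotProduct, Finset.sum_mul]
  simp only [productState_apply_update, mul_assoc]

lemma sum_localOp_mulVec_productState (A : Matrix S S R) (w : ι → S → R) :
    (∑ i, localOp i A) *ᵥ productState R w = ∑ i, productState R (update w i (A *ᵥ w i)) := by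
  simp only [sum_mulVec, localOp_mulVec_productState]

lemma sum_localOp_mulVec_productState_const_eq_zero {A : Matrix S S R} {u : S → R}
    (hu : A *ᵥ u = 0) : (∑ i, localOp i A) *ᵥ productState R (fun _ : ι => u) = 0 := by
  simp [sum_localOp_mulVec_productState, hu, MultilinearMap.map_update_zero]

lemma star_productState_dotProduct_sum_localOp_mulVec_const [StarRing R] (A : Matrix S S R)
    {u : S → R} (hu : star u ⬝ᵥ u = 1) :
    star (productState R fun _ : ι => u) ⬝ᵥ (∑ i, localOp i A) *ᵥ productState R (fun _ => u) =
      Fintype.card ι * (star u ⬝ᵥ A *ᵥ u) := by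
  rw [sum_localOp_mulVec_productState, dotProduct_sum]
  have hterm (i : ι) : star (productState R fun _ : ι => u) ⬝ᵥ
      productState R (update (fun _ => u) i (A *ᵥ u)) = star u ⬝ᵥ A *ᵥ u := by
    rw [star_productState_dotProduct, ← Finset.mul_prod_erase _ _ (Finset.mem_univ i),
      update_self, Finset.prod_eq_one fun j hj => by rw [update_of_ne (ne_of_mem_erase hj), hu],
      mul_one]
  simp [hterm]

end LocalOperator

lemma sum_fin_succ_pi {β M : Type*} [Fintype β] [AddCommMonoid M] {n : ℕ}
    (F : (Fin (n + 1) → β) → M) : ∑ s, F s = ∑ a, ∑ t : Fin n → β, F (Fin.cons a t) := by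
  rw [← (Fin.consEquiv fun _ => β).sum_comp, Fintype.sum_prod_type]
  rfl

lemma sum_fin_four_pi {β M : Type*} [Fintype β] [AddCommMonoid M] (F : (Fin 4 → β) → M) :
    ∑ s, F s = ∑ a, ∑ b, ∑ c, ∑ d, F ![a, b, c, d] := by
  simp only [sum_fin_succ_pi, Fintype.sum_unique]
  rfl

lemma pauli_mul_conjTranspose (α : Fin 3) : pauli α * (pauli α)ᴴ = 1 := by
  fin_cases α <;> ext s t <;> fin_cases s <;> fin_cases t <;>
    simp [pauli, Matrix.mul_apply, Fin.sum_univ_two]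

lemma trace_pauli (α : Fin 3) : (pauli α).trace = 0 := by
  fin_cases α <;> simp [pauli, Matrix.trace, Fin.sum_univ_two]

lemma pauliC_zero (α : Fin 3) : pauliC 0 α = pauli α := by
  simp [pauliC]

lemma transpose_pauliC_one (α : Fin 3) : (pauliC 1 α)ᵀ = (pauli α)ᴴ := by
  simp [pauliC, Matrix.conjTranspose, Matrix.transpose_map]

lemma tau_eq_localOp (N : ℕ) (i : Fin N) (a : Fin 4) (α : Fin 3) :
    tau N i a α = localOp i (localOp a (pauliC a α)) := by
  ext f g
  have hsupp : (∀ p ∈ (univ : Finset (Fin N × Fin 4)).erase (i, a), f p.1 p.2 = g p.1 p.2) ↔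
      (∀ b ∈ univ.erase a, f i b = g i b) ∧ ∀ j ∈ univ.erase i, f j = g j := by
    simp only [Finset.mem_erase, Finset.mem_univ, and_true, ne_eq, Prod.forall, Prod.mk.injEq,
      funext_iff]
    constructor
    · intro h
      exact ⟨fun b hb => h i b (by simp [hb]), fun j hj b => h j b (by simp [hj])⟩
    · rintro ⟨hi, hj⟩ j b hjb
      by_cases hji : j = i
      · subst hji
        exact hi b fun hb => hjb ⟨rfl, hb⟩
      · exact hj j hji b
  simp only [tau, localOp_apply, localMatrix, Matrix.of_apply, Finset.prod_boole, mul_assoc,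
    ite_zero_mul_ite_zero, mul_one, hsupp]

def depolSite : Matrix (Fin 4 → Fin 2) (Fin 4 → Fin 2) ℂ :=
  1 - (1 / 3 : ℂ) • ∑ α : Fin 3, localOp 0 (pauliC 0 α) * localOp 1 (pauliC 1 α)

lemma Hdepol_eq (N : ℕ) (c : ℝ) : Hdepol N c = (c : ℂ) • ∑ i, localOp i depolSite := by
  simp only [Hdepol, depolSite, tau_eq_localOp, map_sub, map_one, map_smul, map_sum, map_mul]

lemma localOp_mul_localOp_mulVec_idS (P Q : Matrix (Fin 2) (Fin 2) ℂ) (s : Fin 4 → Fin 2) :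
    ((localOp 0 P * localOp 1 Q) *ᵥ idS) s =
      if s 2 = s 3 then (P * Qᵀ) (s 0) (s 1) / 2 else 0 := by
  rw [localOp_mul_localOp_mulVec_apply (show (0 : Fin 4) ≠ 1 by decide)]
  split_ifs with h23
  · simp [idS, h23, Matrix.mul_apply, div_eq_mul_inv, Finset.sum_mul, -Fin.sum_univ_two]
  · simp [idS, h23]

lemma depolSite_mulVec_idS : depolSite *ᵥ idS = 0 := by
  have hpauli : ∑ α, (localOp 0 (pauliC 0 α) * localOp 1 (pauliC 1 α)) *ᵥ idS =
      (3 : ℂ) • idS := by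
    funext s
    simp only [Finset.sum_apply, localOp_mul_localOp_mulVec_idS, pauliC_zero,
      transpose_pauliC_one, pauli_mul_conjTranspose]
    by_cases h23 : s 2 = s 3 <;> by_cases h01 : s 0 = s 1 <;>
      simp [idS, h23, h01, Matrix.one_apply]
  rw [depolSite, sub_mulVec, one_mulVec, smul_mulVec, sum_mulVec, hpauli, smul_smul]
  norm_num

lemma star_swapS_dotProduct_localOp_mul_localOp_mulVec_swapS (P Q : Matrix (Fin 2) (Fin 2) ℂ) :
    star swapS ⬝ᵥ (localOp 0 P * localOp 1 Q) *ᵥ swapS = P.trace * Q.trace / 4 := by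
  simp only [dotProduct, localOp_mul_localOp_mulVec_apply (show (0 : Fin 4) ≠ 1 by decide),
    sum_fin_four_pi, Matrix.trace, Finset.sum_mul_sum, Finset.sum_div]
  have hquarter (x : ℂ) : ((starRingEnd ℂ) 2)⁻¹ * (x * 2⁻¹) = x / 4 := by
    rw [map_ofNat]
    ring
  simp [swapS, ite_and, apply_ite (starRingEnd ℂ), ite_mul, hquarter, -Fin.sum_univ_two]

lemma star_swapS_dotProduct_swapS : star swapS ⬝ᵥ swapS = 1 := by
  have h := star_swapS_dotProduct_localOp_mul_localOp_mulVec_swapS 1 1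
  rw [map_one, map_one, mul_one, one_mulVec, trace_one] at h
  rw [h]
  norm_num

lemma star_swapS_dotProduct_depolSite_mulVec_swapS : star swapS ⬝ᵥ depolSite *ᵥ swapS = 1 := by
  simp [depolSite, sub_mulVec, smul_mulVec, sum_mulVec, dotProduct_sub, dotProduct_sum,
    star_swapS_dotProduct_swapS, star_swapS_dotProduct_localOp_mul_localOp_mulVec_swapS,
    pauliC_zero, trace_pauli]

lemma idN_eq_productState (N : ℕ) : idN N = productState ℂ fun _ => idS := by
  funext f
  simp [idN]

lemma swapN_eq_productState (N : ℕ) : swapN N = productState ℂ fun _ => swapS := by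
  funext f
  simp [swapN]

lemma Hdepol_mulVec_idN (N : ℕ) (c : ℝ) : Hdepol N c *ᵥ idN N = 0 := by
  rw [Hdepol_eq, smul_mulVec, idN_eq_productState,
    sum_localOp_mulVec_productState_const_eq_zero depolSite_mulVec_idS, smul_zero]

lemma star_swapN_dotProduct_Hdepol_mulVec_swapN (N : ℕ) (c : ℝ) :
    star (swapN N) ⬝ᵥ Hdepol N c *ᵥ swapN N = c * N := by
  rw [Hdepol_eq, smul_mulVec, dotProduct_smul, swapN_eq_productState,
    star_productState_dotProduct_sum_localOp_mulVec_const _ star_swapS_dotProduct_swapS,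
    star_swapS_dotProduct_depolSite_mulVec_swapS]
  simp

/-- for every `c > 0`, `H_depol |id⟩⟩^{⊗N} = 0` while
`⟨swap|^{⊗N} H_depol |swap⟩⟩^{⊗N} = c·N`; in particular, for
`c = (3/(4δt))·log(1/(1-4λ/3))` with `δt > 0` and `0 ≤ λ < 3/4` the expectation value on
`|swap⟩⟩^{⊗N}` equals `(3N/(4δt))·log(1/(1-4λ/3))`: the noise lifts the degeneracy between
the two replica-symmetry-broken states, favoring `|id⟩⟩^{⊗N}`. -/
theorem stmt13 (N : ℕ) :
    (∀ c : ℝ, 0 < c →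
      (Hdepol N c).mulVec (idN N) = 0 ∧
      star (swapN N) ⬝ᵥ (Hdepol N c).mulVec (swapN N) = (c : ℂ) * N) ∧
    (∀ δt lam : ℝ, 0 < δt → 0 ≤ lam → lam < 3 / 4 →
      star (swapN N) ⬝ᵥ
          (Hdepol N (3 / (4 * δt) * Real.log (1 / (1 - 4 * lam / 3)))).mulVec (swapN N) =
        ((3 * N / (4 * δt) * Real.log (1 / (1 - 4 * lam / 3)) : ℝ) : ℂ)) := by
  refine ⟨fun c _ => ⟨Hdepol_mulVec_idN N c, star_swapN_dotProduct_Hdepol_mulVec_swapN N c⟩,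
    fun δt lam _ _ _ => ?_⟩
  rw [star_swapN_dotProduct_Hdepol_mulVec_swapN]
  push_cast
  ring

end
end
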